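/- Let f be smooth with f' > 0, f(π) = π, f'(π) = 1, and let u be the associated smooth periodic function with F'(x) = e^{u(x)}/cos²(x/2) where F(x) = 2tan(f(x)/2). Then S(F)(x) = u''(x) - (1/2)u'(x)² - u'(x)·tan(x/2) + 1/2 wherever defined, and in particular (c/12)·((1/2)f'(x)² + S(f)(x)) = (c/12)·(u''(x) - (1/2)u'(x)² - u'(x)tan(x/2) + 1/2). -/

import Mathlib

open Real

noncomputable def schwarzian (f : ℝ → ℝ) (x : ℝ) : ℝ :=
  deriv (deriv (deriv f)) x / deriv f x - 3/2 * (deriv (deriv f) x / deriv f x)^2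

lemma deriv_eqOn' {F E : ℝ → ℝ} {s : Set ℝ} (hs : IsOpen s)
    (h : ∀ y ∈ s, F y = E y) {x : ℝ} (hx : x ∈ s) : deriv F x = deriv E x :=
  Filter.EventuallyEq.deriv_eq (Filter.eventuallyEq_of_mem (hs.mem_nhds hx) h)

lemma schwarzian_eq {F E : ℝ → ℝ} {s : Set ℝ} (hs : IsOpen s)
    (h : ∀ y ∈ s, deriv F y = E y) {x : ℝ} (hx : x ∈ s) :
    schwarzian F x = deriv (deriv E) x / E x - 3/2 * (deriv E x / E x)^2 := by
  have h2 : ∀ y ∈ s, deriv (deriv F) y = deriv E y := fun y hy => deriv_eqOn' hs h hy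
  have h3 : deriv (deriv (deriv F)) x = deriv (deriv E) x := deriv_eqOn' hs h2 hx
  unfold schwarzian
  rw [h3, h2 x hx, h x hx]

lemma E1_hasDeriv (u : ℝ → ℝ) (hu : ContDiff ℝ (⊤ : ℕ∞) u) (x : ℝ) (hc : Real.cos (x/2) ≠ 0) :
    HasDerivAt (fun y => Real.exp (u y) / Real.cos (y/2)^2)
      (Real.exp (u x) / Real.cos (x/2)^2 * (deriv u x + Real.tan (x/2))) x := by
  have hdu : HasDerivAt u (deriv u x) x := ((hu.differentiable (by simp)) x).hasDerivAt
  have h1 : HasDerivAt (fun y => Real.exp (u y)) (Real.exp (u x) * deriv u x) x := hdu.exp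
  have h2 : HasDerivAt (fun y : ℝ => y / 2) (1/2) x := (hasDerivAt_id x).div_const 2
  have h3 : HasDerivAt (fun y : ℝ => Real.cos (y/2)) (-Real.sin (x/2) * (1/2)) x :=
    by have := (Real.hasDerivAt_cos (x/2)).comp x h2; exact this
  have h4 : HasDerivAt (fun y : ℝ => Real.cos (y/2)^2)
      (2 * Real.cos (x/2) ^ 1 * (-Real.sin (x/2) * (1/2))) x := by
    simpa using h3.fun_pow 2
  have h5 := h1.fun_div h4 (pow_ne_zero 2 hc)
  refine h5.congr_deriv ?_
  rw [Real.tan_eq_sin_div_cos]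
  field_simp
  ring

lemma smooth_deriv {u : ℝ → ℝ} (hu : ContDiff ℝ (⊤ : ℕ∞) u) : ContDiff ℝ (⊤ : ℕ∞) (deriv u) := by
  have h : ContDiff ℝ (((⊤ : ℕ∞) : WithTop ℕ∞) + 1) u := by exact_mod_cast hu
  exact (contDiff_succ_iff_deriv.mp h).2.2

lemma one_div_cos_sq (z : ℝ) (h : Real.cos z ≠ 0) :
    1 / Real.cos z ^ 2 = Real.tan z ^ 2 + 1 := by
  rw [Real.tan_eq_sin_div_cos, div_pow]
  field_simp
  exact (sin_sq_add_cos_sq z).symm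

lemma part1 (u F : ℝ → ℝ) (hu : ContDiff ℝ (⊤ : ℕ∞) u)
    (hF' : ∀ x, deriv F x = Real.exp (u x) / (Real.cos (x/2))^2)
    (x : ℝ) (hc : Real.cos (x/2) ≠ 0) :
    schwarzian F x = deriv (deriv u) x - 1/2 * (deriv u x)^2
          - deriv u x * Real.tan (x/2) + 1/2 := by
  set E : ℝ → ℝ := fun y => Real.exp (u y) / Real.cos (y/2)^2 with hE
  set G : ℝ → ℝ := fun y => E y * (deriv u y + Real.tan (y/2)) with hG
  have hs : IsOpen {y : ℝ | Real.cos (y/2) ≠ 0} :=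
    isOpen_ne.preimage (by continuity)
  -- deriv E on s
  have hDE : ∀ y ∈ {y : ℝ | Real.cos (y/2) ≠ 0}, deriv E y = G y := fun y hy =>
    (E1_hasDeriv u hu y hy).deriv
  -- second derivative: deriv G at x
  have hdu : ContDiff ℝ (⊤ : ℕ∞) (deriv u) := smooth_deriv hu
  have h2 : HasDerivAt (fun y : ℝ => y / 2) (1/2) x := (hasDerivAt_id x).div_const 2
  have htan : HasDerivAt (fun y : ℝ => Real.tan (y/2)) (1 / Real.cos (x/2)^2 * (1/2)) x :=
    by have := (Real.hasDerivAt_tan hc).comp x h2; exact this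
  have hsum : HasDerivAt (fun y => deriv u y + Real.tan (y/2))
      (deriv (deriv u) x + 1 / Real.cos (x/2)^2 * (1/2)) x :=
    (((hdu.differentiable (by simp)) x).hasDerivAt).add htan
  have hGd : HasDerivAt G
      (E x * (deriv u x + Real.tan (x/2)) * (deriv u x + Real.tan (x/2))
        + E x * (deriv (deriv u) x + 1 / Real.cos (x/2)^2 * (1/2))) x :=
    (E1_hasDeriv u hu x hc).mul hsum
  have hDDE : deriv (deriv E) x
      = E x * (deriv u x + Real.tan (x/2)) * (deriv u x + Real.tan (x/2))
        + E x * (deriv (deriv u) x + 1 / Real.cos (x/2)^2 * (1/2)) := by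
    rw [deriv_eqOn' hs hDE hc]
    exact hGd.deriv
  have hDEs : ∀ y ∈ {y : ℝ | Real.cos (y/2) ≠ 0}, deriv F y = E y := fun y _ => hF' y
  have hS := schwarzian_eq hs hDEs (x := x) hc
  have hDE' : deriv E x = G x := hDE x hc
  have hEne : E x ≠ 0 := div_ne_zero (Real.exp_ne_zero _) (pow_ne_zero 2 hc)
  have hGx : G x = E x * (deriv u x + Real.tan (x/2)) := rfl
  have hinv : (1 : ℝ) / Real.cos (x/2)^2 = Real.tan (x/2)^2 + 1 := by
    rw [Real.tan_eq_sin_div_cos, div_pow]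
    field_simp
    exact (sin_sq_add_cos_sq (x/2)).symm
  rw [hS, hDDE, hDE', hGx, hinv]
  field_simp [hEne]
  ring

lemma part2 (f F : ℝ → ℝ) (hf : ContDiff ℝ (⊤ : ℕ∞) f) (hf' : ∀ x, 0 < deriv f x)
    (hF : ∀ x, F x = 2 * Real.tan (f x / 2)) (x : ℝ) (hcf : Real.cos (f x / 2) ≠ 0) :
    schwarzian F x = 1/2 * (deriv f x)^2 + schwarzian f x := by
  set E : ℝ → ℝ := fun y => deriv f y * (1 + Real.tan (f y / 2)^2) with hEdef
  set D : ℝ → ℝ := fun y => deriv (deriv f) y * (1 + Real.tan (f y/2)^2)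
      + (deriv f y)^2 * Real.tan (f y/2) * (1 + Real.tan (f y/2)^2) with hDdef
  have hs : IsOpen {y : ℝ | Real.cos (f y / 2) ≠ 0} :=
    isOpen_ne.preimage (Real.continuous_cos.comp (hf.continuous.div_const 2))
  have hdf : ∀ y : ℝ, HasDerivAt f (deriv f y) y :=
    fun y => ((hf.differentiable (by simp)) y).hasDerivAt
  have htan : ∀ y ∈ {y : ℝ | Real.cos (f y / 2) ≠ 0},
      HasDerivAt (fun z => Real.tan (f z / 2)) (1 / Real.cos (f y/2)^2 * (deriv f y / 2)) y :=
    fun y hy => by have := (Real.hasDerivAt_tan hy).comp y ((hdf y).div_const 2); exact this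
  have hdd : ∀ y : ℝ, HasDerivAt (deriv f) (deriv (deriv f) y) y :=
    fun y => (((smooth_deriv hf).differentiable (by simp)) y).hasDerivAt
  have hddd : HasDerivAt (deriv (deriv f)) (deriv (deriv (deriv f)) x) x :=
    (((smooth_deriv (smooth_deriv hf)).differentiable (by simp)) x).hasDerivAt
  have hT : ∀ y ∈ {y : ℝ | Real.cos (f y / 2) ≠ 0},
      HasDerivAt (fun z => 1 + Real.tan (f z / 2)^2)
        (2 * Real.tan (f y/2)^1 * (1 / Real.cos (f y/2)^2 * (deriv f y / 2))) y :=
    fun y hy => ((htan y hy).pow 2).const_add 1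
  -- Step A : deriv F = E on s
  have hA : ∀ y ∈ {y : ℝ | Real.cos (f y / 2) ≠ 0}, deriv F y = E y := by
    intro y hy
    have hFeq : F = fun z => 2 * Real.tan (f z / 2) := funext hF
    rw [hFeq, ((htan y hy).const_mul 2).deriv, hEdef]
    rw [one_div_cos_sq _ hy]
    ring
  -- Step B : deriv E = D on s
  have hB : ∀ y ∈ {y : ℝ | Real.cos (f y / 2) ≠ 0}, deriv E y = D y := by
    intro y hy
    have hE2d : HasDerivAt E
        (deriv (deriv f) y * (1 + Real.tan (f y/2)^2)
          + deriv f y * (2 * Real.tan (f y/2)^1 * (1 / Real.cos (f y/2)^2 * (deriv f y / 2)))) y :=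
      (hdd y).mul (hT y hy)
    rw [hE2d.deriv, hDdef, one_div_cos_sq _ hy]
    ring
  -- Step C : second derivative
  have hDd : HasDerivAt D
      ((deriv (deriv (deriv f)) x * (1 + Real.tan (f x/2)^2)
        + deriv (deriv f) x * (2 * Real.tan (f x/2)^1 * (1 / Real.cos (f x/2)^2 * (deriv f x / 2))))
      + (((2 * deriv f x ^ 1 * deriv (deriv f) x) * Real.tan (f x/2)
            + (deriv f x)^2 * (1 / Real.cos (f x/2)^2 * (deriv f x / 2))) * (1 + Real.tan (f x/2)^2)
        + (deriv f x)^2 * Real.tan (f x/2)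
            * (2 * Real.tan (f x/2)^1 * (1 / Real.cos (f x/2)^2 * (deriv f x / 2))))) x :=
    (hddd.mul (hT x hcf)).add ((((hdd x).pow 2).mul (htan x hcf)).mul (hT x hcf))
  have hC : deriv (deriv E) x
      = (deriv (deriv (deriv f)) x * (1 + Real.tan (f x/2)^2)
        + deriv (deriv f) x * (2 * Real.tan (f x/2)^1 * (1 / Real.cos (f x/2)^2 * (deriv f x / 2))))
      + (((2 * deriv f x ^ 1 * deriv (deriv f) x) * Real.tan (f x/2)
            + (deriv f x)^2 * (1 / Real.cos (f x/2)^2 * (deriv f x / 2))) * (1 + Real.tan (f x/2)^2)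
        + (deriv f x)^2 * Real.tan (f x/2)
            * (2 * Real.tan (f x/2)^1 * (1 / Real.cos (f x/2)^2 * (deriv f x / 2)))) := by
    rw [deriv_eqOn' hs hB hcf]
    exact hDd.deriv
  have hS := schwarzian_eq hs hA (x := x) hcf
  have hDx : D x = deriv (deriv f) x * (1 + Real.tan (f x/2)^2)
      + (deriv f x)^2 * Real.tan (f x/2) * (1 + Real.tan (f x/2)^2) := rfl
  have hEx : E x = deriv f x * (1 + Real.tan (f x/2)^2) := rfl
  have ha : deriv f x ≠ 0 := (hf' x).ne'
  have hTne : (1 : ℝ) + Real.tan (f x/2)^2 ≠ 0 := by positivity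
  rw [hS, hC, hB x hcf, hDx, hEx, one_div_cos_sq _ hcf]
  unfold schwarzian
  field_simp
  ring

theorem teichmueller_moment_density (c : ℝ) (f : ℝ → ℝ)
    (hf : ContDiff ℝ (⊤ : ℕ∞) f) (hf' : ∀ x, 0 < deriv f x)
    (hfπ : f π = π) (hf'π : deriv f π = 1)
    (u : ℝ → ℝ) (hu : ContDiff ℝ (⊤ : ℕ∞) u) (huper : ∀ x, u (x + 2*π) = u x)
    (F : ℝ → ℝ) (hF : ∀ x, F x = 2 * Real.tan (f x / 2))
    (hF' : ∀ x, deriv F x = Real.exp (u x) / (Real.cos (x/2))^2) :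
    ∀ x, Real.cos (x/2) ≠ 0 → Real.cos (f x / 2) ≠ 0 →
      schwarzian F x
        = deriv (deriv u) x - 1/2 * (deriv u x)^2
          - deriv u x * Real.tan (x/2) + 1/2 ∧
      c/12 * ((1/2) * (deriv f x)^2 + schwarzian f x)
        = c/12 * (deriv (deriv u) x - 1/2 * (deriv u x)^2
          - deriv u x * Real.tan (x/2) + 1/2) := by
  intro x hc hcf
  have h1 := part1 u F hu hF' x hc
  have h2 := part2 f F hf hf' hF x hcf
  exact ⟨h1, by rw [← h2, h1]⟩
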